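/- arXiv:2108.04502 — 3 statements merged into one kernel-verified Lean document; each statement's English description precedes it below -/
import Mathlib

section
/- Let G = ⟨σ⟩ be a finite cyclic group acting on a finite abelian group M, with filtration M₀ = 1, M_{i+1} = ker((1-σ)^{i+1}), and let n be the least integer with M_n = M. Then #M = ∏_{i=0}^{n-1} #(M_{i+1}/M_i). Moreover, if #M^G = p for a prime p, then #(M_{i+1}/M_i) = p for every 0 ≤ i ≤ n-1, so #M = p^n. -/
/-!
With `τ = 1 - σ`, the kernels `M_i = ker τ^i` form an increasing chain starting at `0`, so `#M`
telescopes into the product of the indices `[M_{i+1} : M_i]`. The map `τ^i` sends `M_{i+1}` into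
`M_1` with kernel `M_i`, so each index divides `#M_1 = p`. It is not `1` for `i < n`: once
`M_{i+1} = M_i` the chain is stationary, contradicting the minimality of `n`.
-/

/-- The endomorphism `1 - σ` of an abelian group `M`, for `σ` an automorphism. -/
def oneSubSigma {M : Type*} [AddCommGroup M] (σ : AddAut M) : AddMonoid.End M :=
  1 - (show AddMonoid.End M from AddEquiv.toAddMonoidHom σ)

open Finset

theorem AddSubgroup.card_eq_prod_relIndex_of_monotone {G : Type*} [AddGroup G]
    {F : ℕ → AddSubgroup G} (hF : Monotone F) (h0 : F 0 = ⊥) (k : ℕ) :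
    Nat.card (F k) = ∏ i ∈ range k, (F i).relIndex (F (i + 1)) := by
  induction k with
  | zero => simp [h0]
  | succ k ih =>
    rw [prod_range_succ, ← ih, ← relIndex_bot_left, ← relIndex_bot_left,
      relIndex_mul_relIndex _ _ _ bot_le (hF k.le_succ)]

namespace AddMonoid.End

variable {M : Type*} [AddGroup M] (τ : AddMonoid.End M)

theorem mem_ker_pow_succ_iff {i : ℕ} {x : M} :
    x ∈ AddMonoidHom.ker (τ ^ (i + 1)) ↔ τ x ∈ AddMonoidHom.ker (τ ^ i) :=
  Iff.rfl

theorem ker_pow_zero : AddMonoidHom.ker (τ ^ 0) = ⊥ :=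
  AddSubgroup.ext fun _ => Iff.rfl

theorem ker_pow_monotone : Monotone fun i => AddMonoidHom.ker (τ ^ i) :=
  monotone_nat_of_le_succ fun i x (hx : (τ ^ i) x = 0) => by
    show (τ ^ (i + 1)) x = 0
    rw [pow_succ', coe_mul, Function.comp_apply, hx, map_zero]

theorem ker_pow_eq_of_ker_pow_succ_le {i j : ℕ}
    (h : AddMonoidHom.ker (τ ^ (i + 1)) ≤ AddMonoidHom.ker (τ ^ i)) (hij : i ≤ j) :
    AddMonoidHom.ker (τ ^ j) = AddMonoidHom.ker (τ ^ i) := by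
  induction j, hij using Nat.le_induction with
  | base => rfl
  | succ j _ ih =>
    refine le_antisymm (fun x hx => h ?_) (τ.ker_pow_monotone (by omega))
    rw [mem_ker_pow_succ_iff, ← ih, ← mem_ker_pow_succ_iff]
    exact hx

theorem relIndex_ker_pow_succ_dvd_card_ker (i : ℕ) :
    (AddMonoidHom.ker (τ ^ i)).relIndex (AddMonoidHom.ker (τ ^ (i + 1))) ∣
      Nat.card (AddMonoidHom.ker τ) := by
  calc _ = Nat.card ((AddMonoidHom.ker (τ ^ (i + 1))).map (τ ^ i)) :=
        AddSubgroup.relIndex_ker (f := τ ^ i) _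
    _ ∣ _ := AddSubgroup.card_dvd_of_le ?_
  rintro _ ⟨x, hx, rfl⟩
  show (τ * τ ^ i) x = 0
  rwa [← pow_succ']

theorem relIndex_ker_pow_succ_ne_one {i n : ℕ} (hin : i ≤ n)
    (h : AddMonoidHom.ker (τ ^ i) ≠ AddMonoidHom.ker (τ ^ n)) :
    (AddMonoidHom.ker (τ ^ i)).relIndex (AddMonoidHom.ker (τ ^ (i + 1))) ≠ 1 := fun h1 =>
  h (τ.ker_pow_eq_of_ker_pow_succ_le (AddSubgroup.relIndex_eq_one.mp h1) hin).symm

end AddMonoid.End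

theorem stmt3_general {M : Type*} [AddCommGroup M]
    (σ : AddAut M)
    (Mf : ℕ → AddSubgroup M)
    (hMf : ∀ i, Mf i = AddMonoidHom.ker ((oneSubSigma σ) ^ i))
    (n : ℕ) (hn : Mf n = ⊤) (hmin : ∀ m < n, Mf m ≠ ⊤)
    (p : ℕ) (hp : p.Prime) :
    Nat.card M =
      ∏ i ∈ Finset.range n,
        Nat.card (Mf (i + 1) ⧸ (Mf i).addSubgroupOf (Mf (i + 1))) ∧
    (Nat.card (Mf 1) = p →
      (∀ i < n, Nat.card (Mf (i + 1) ⧸ (Mf i).addSubgroupOf (Mf (i + 1))) = p) ∧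
      Nat.card M = p ^ n) := by
  obtain rfl : Mf = fun i => AddMonoidHom.ker (oneSubSigma σ ^ i) := funext hMf
  set τ := oneSubSigma σ
  have hcard : Nat.card M = ∏ i ∈ range n,
      (AddMonoidHom.ker (τ ^ i)).relIndex (AddMonoidHom.ker (τ ^ (i + 1))) := by
    rw [← AddSubgroup.card_top, ← hn]
    exact AddSubgroup.card_eq_prod_relIndex_of_monotone τ.ker_pow_monotone τ.ker_pow_zero n
  have hfactor (h1 : Nat.card (AddMonoidHom.ker τ) = p) (i : ℕ) (hi : i < n) :
      (AddMonoidHom.ker (τ ^ i)).relIndex (AddMonoidHom.ker (τ ^ (i + 1))) = p :=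
    (hp.eq_one_or_self_of_dvd _ (h1 ▸ τ.relIndex_ker_pow_succ_dvd_card_ker i)).resolve_left
      (τ.relIndex_ker_pow_succ_ne_one hi.le fun h => hmin i hi (h.trans hn))
  -- `relIndex` unfolds to the cardinality of the quotients in the statement.
  refine ⟨hcard, fun h1 => ⟨hfactor h1, ?_⟩⟩
  rw [hcard, prod_congr rfl fun i hi => hfactor h1 i (mem_range.mp hi), prod_const, card_range]

/-- For a cyclic group `G = ⟨σ⟩` acting on a finite abelian group `M`, with filtration
`M_i = ker((1-σ)^i)` and `n` least with `M_n = M`: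
`#M = ∏_{i<n} #(M_{i+1}/M_i)`; moreover if `#M^G = p` (p prime), then each
`#(M_{i+1}/M_i) = p` for `i < n`, so `#M = p^n`. -/
theorem stmt3 {M : Type*} [AddCommGroup M] [Finite M] (d : ℕ) (hd : 0 < d)
    (σ : AddAut M) (hσ : d • σ = 0)
    (Mf : ℕ → AddSubgroup M)
    (hMf : ∀ i, Mf i = AddMonoidHom.ker ((oneSubSigma σ) ^ i))
    (n : ℕ) (hn : Mf n = ⊤) (hmin : ∀ m < n, Mf m ≠ ⊤)
    (p : ℕ) (hp : p.Prime) :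
    Nat.card M =
      ∏ i ∈ Finset.range n,
        Nat.card (Mf (i + 1) ⧸ (Mf i).addSubgroupOf (Mf (i + 1))) ∧
    (Nat.card (Mf 1) = p →
      (∀ i < n, Nat.card (Mf (i + 1) ⧸ (Mf i).addSubgroupOf (Mf (i + 1))) = p) ∧
      Nat.card M = p ^ n) :=
  stmt3_general σ Mf hMf n hn hmin p hp
end

section
/- Let p be a prime, G = ⟨σ⟩ cyclic of order p, and M a finite ℤ_p[G]-module with M^ν = 1 (ν the norm element). If the endomorphism (1-σ)^m annihilates M for some m ≤ p-2, then M is an elementary abelian p-group (i.e., every element has order dividing p). -/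
open Polynomial Finset

theorem sum_range_one_sub_X_pow_eq_X_pow_pred (p : ℕ) [Fact p.Prime] :
    ∑ i ∈ range p, (1 - X : (ZMod p)[X]) ^ i = X ^ (p - 1) := by
  have hp : 1 ≤ p := (Fact.out : p.Prime).one_le
  refine mul_left_cancel₀ (neg_ne_zero.2 (X_ne_zero (R := ZMod p))) ?_
  calc -X * ∑ i ∈ range p, (1 - X : (ZMod p)[X]) ^ i
      = (∑ i ∈ range p, (1 - X : (ZMod p)[X]) ^ i) * ((1 - X) - 1) := by ring
    _ = (1 - X) ^ p - 1 := geom_sum_mul _ _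
    _ = -X * X ^ (p - 1) := by
      rw [sub_pow_char, one_pow, neg_mul, ← pow_succ', Nat.sub_add_cancel hp]; ring

theorem exists_sum_range_one_sub_X_pow_eq {p : ℕ} (hp : p.Prime) :
    ∃ U : ℤ[X], ∑ i ∈ range p, (1 - X : ℤ[X]) ^ i = X ^ (p - 1) + C (p : ℤ) * (1 + X * U) := by
  have := Fact.mk hp
  obtain ⟨Q, hQ⟩ : C (p : ℤ) ∣ ∑ i ∈ range p, (1 - X : ℤ[X]) ^ i - X ^ (p - 1) := by
    have hmap : map (Int.castRingHom (ZMod p)) (∑ i ∈ range p, (1 - X) ^ i - X ^ (p - 1)) = 0 := by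
      simp [Polynomial.map_sum, sum_range_one_sub_X_pow_eq_X_pow_pred]
    refine (C_dvd_iff_dvd_coeff _ _).2 fun n => (ZMod.intCast_zmod_eq_zero_iff_dvd _ p).1 ?_
    simpa using congrArg (coeff · n) hmap
  have hQ0 : Q.coeff 0 = 1 := by
    have h := congrArg (eval 0) hQ
    simp only [eval_sub, eval_finsetSum, eval_pow, eval_one, eval_X, sub_zero, one_pow, sum_const,
      card_range, Int.nsmul_eq_mul, mul_one, zero_pow (Nat.sub_ne_zero_of_lt hp.one_lt),
      map_natCast, eval_mul, eval_natCast] at h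
    rw [coeff_zero_eq_eval_zero]
    exact (mul_eq_left₀ (by exact_mod_cast hp.ne_zero)).1 h.symm
  obtain ⟨U, hU⟩ := X_dvd_sub_C (p := Q)
  refine ⟨U, ?_⟩
  rw [← hU, hQ0, C_1, add_sub_cancel, ← hQ, add_sub_cancel]

theorem natCast_eq_zero_of_sum_range_one_sub_pow_eq_zero {A : Type*} [Ring A] {p : ℕ}
    (hp : p.Prime) {t : A} (ht : t ^ (p - 1) = 0) (hsum : ∑ i ∈ range p, (1 - t) ^ i = 0) :
    (p : A) = 0 := by
  obtain ⟨U, hU⟩ := exists_sum_range_one_sub_X_pow_eq hp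
  have hcomm : Commute t (aeval t U) := by simpa using (commute_X U).map (aeval t)
  have hunit : IsUnit (1 + t * aeval t U) :=
    (hcomm.isNilpotent_mul_right ⟨p - 1, ht⟩).isUnit_one_add
  have hUt := congrArg (aeval t) hU
  simp only [map_sum, map_pow, map_sub, map_one, aeval_X, map_add, map_mul, map_natCast, ht, hsum,
    zero_add] at hUt
  exact hunit.mul_left_eq_zero.1 hUt.symm

theorem AddAut.toAddMonoidHom_pow_apply {M : Type*} [AddCommMonoid M] (σ : AddAut M) (n : ℕ)
    (x : M) : ((show AddMonoid.End M from σ.toAddMonoidHom) ^ n) x = (n • σ) x := by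
  induction n generalizing x with
  | zero => rfl
  | succ n ih => rw [pow_succ, succ_nsmul, AddAut.add_apply, ← ih]; rfl

theorem stmt9_general {M : Type*} [AddCommGroup M] (p : ℕ) (hp : p.Prime)
    (σ : AddAut M)
    (hν : ∀ x : M, ∑ i ∈ Finset.range p, (i • σ) x = 0)
    (m : ℕ) (hm : m ≤ p - 2)
    (hann : ∀ x : M, ((oneSubSigma σ) ^ m) x = 0) :
    ∀ x : M, p • x = 0 := by
  have hsub : 1 - oneSubSigma σ = σ.toAddMonoidHom := sub_sub_cancel _ _
  have hnorm : ∑ i ∈ range p, (1 - oneSubSigma σ) ^ i = 0 := AddMonoidHom.ext fun x => by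
    refine (AddMonoidHom.finsetSum_apply (fun i => (1 - oneSubSigma σ) ^ i) _ x).trans ?_
    rw [hsub]
    exact (sum_congr rfl fun i _ => AddAut.toAddMonoidHom_pow_apply σ i x).trans (hν x)
  have hnil : oneSubSigma σ ^ (p - 1) = 0 := pow_eq_zero_of_le (by omega) (AddMonoidHom.ext hann)
  intro x
  rw [← AddMonoid.End.natCast_apply, natCast_eq_zero_of_sum_range_one_sub_pow_eq_zero hp hnil hnorm]
  rfl

/-- For a finite `ℤ_p[G]`-module `M` (`G = ⟨σ⟩` of order `p`) annihilated by the norm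
`ν = 1 + σ + ⋯ + σ^{p-1}`: if `(1-σ)^m` annihilates `M` for some `m ≤ p-2`, then `M`
is elementary abelian (every element is killed by `p`). -/
theorem stmt9 {M : Type*} [AddCommGroup M] [Finite M] (p : ℕ) (hp : p.Prime)
    (σ : AddAut M) (hσ : p • σ = 0)
    (hpgrp : ∀ x : M, ∃ j : ℕ, p ^ j • x = 0)
    (hν : ∀ x : M, ∑ i ∈ Finset.range p, (i • σ) x = 0)
    (m : ℕ) (hm : m ≤ p - 2)
    (hann : ∀ x : M, ((oneSubSigma σ) ^ m) x = 0) :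
    ∀ x : M, p • x = 0 :=
  stmt9_general p hp σ hν m hm hann
end

section
/- Let p be a prime, G = ⟨σ⟩ cyclic of order p, M a finite ℤ_p[G]-module annihilated by the norm ν, with filtration M_i = ker((1-σ)^i). For k ≥ 1 let R_k denote the p^k-rank of M (the 𝔽_p-dimension of M^{p^{k-1}}/M^{p^k}). Then p^{R_k} = ∏_{i=(k-1)(p-1)}^{k(p-1)-1} #(M_{i+1}/M_i). -/
/-- The subgroup `q·S` of `q`-th "powers" (multiples) of a subgroup `S`. -/
def Ppow {M : Type*} [AddCommGroup M] (S : AddSubgroup M) (q : ℕ) : AddSubgroup M :=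
  S.map (show AddMonoid.End M from (q : AddMonoid.End M))

/-! Put `x = σ - 1`. Expanding `(x + 1)^i` binomially, the norm relation `∑_{i<p} σ^i = 0`
becomes `∑_{j<p} C(p, j+1) x^j = 0`. All these coefficients except the top one are divisible by
`p`, and `C(p, 1) = p`, so `x^(p-1) = p·u` with `u ≡ -1` modulo `x`; since `p` and hence `x` are
nilpotent in `End M`, `u` is a unit. Therefore `M_{m(p-1)} = ker x^{m(p-1)}` is the `p^m`-torsion
`M[p^m]`. Counting ranges and kernels of `p^{k-1}` and `p^k` gives
`#(p^{k-1}M / p^k M) = #(M[p^k] / M[p^{k-1}])`, and the latter index telescopes along the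
filtration `M_{(k-1)(p-1)} ≤ ⋯ ≤ M_{k(p-1)}`. -/

open Finset

theorem geom_sum_add_one_eq_sum_choose {R : Type*} [Semiring R] (x : R) (n : ℕ) :
    ∑ i ∈ range n, (x + 1) ^ i = ∑ j ∈ range n, (n.choose (j + 1) : R) * x ^ j := by
  induction n with
  | zero => simp
  | succ n ih =>
    rw [sum_range_succ, ih, (Commute.one_right x).add_pow]
    simp only [Nat.choose_succ_succ, Nat.cast_add, add_mul, sum_add_distrib, one_pow, mul_one]
    rw [sum_range_succ (fun j => (n.choose (j + 1) : R) * x ^ j) n, Nat.choose_succ_self,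
      Nat.cast_zero, zero_mul, add_zero, add_comm]
    congr 1
    exact sum_congr rfl fun j _ => (Nat.cast_commute _ _).symm

theorem Nat.Prime.exists_sum_choose_succ_mul_pow_eq {R : Type*} [Ring R] {p : ℕ}
    (hp : p.Prime) (x : R) :
    ∃ w : R, Commute x w ∧
      ∑ j ∈ range p, (p.choose (j + 1) : R) * x ^ j = x ^ (p - 1) + p * (1 + x * w) := by
  obtain ⟨q, rfl⟩ : ∃ q, p = q + 2 := ⟨p - 2, by have := hp.two_le; omega⟩
  have hdvd : ∀ j < q, q + 2 ∣ (q + 2).choose (j + 2) := fun j hj =>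
    hp.dvd_choose_self (by omega) (by omega)
  refine ⟨∑ j ∈ range q, (((q + 2).choose (j + 2) / (q + 2) : ℕ) : R) * x ^ j,
    Commute.sum_right _ _ _ fun j _ =>
      (Nat.cast_commute _ x).symm.mul_right (.pow_right (.refl x) j), ?_⟩
  have hterm : ∀ j ∈ range q, ((q + 2).choose (j + 1 + 1) : R) * x ^ (j + 1) =
      (q + 2 : ℕ) * (x * (((q + 2).choose (j + 2) / (q + 2) : ℕ) * x ^ j)) := fun j hj => by
    have hc : ((q + 2).choose (j + 1 + 1) : R) =
        (q + 2 : ℕ) * ((q + 2).choose (j + 2) / (q + 2) : ℕ) := by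
      rw [← Nat.cast_mul, Nat.mul_div_cancel' (hdvd j (mem_range.mp hj))]
    rw [hc, _root_.pow_succ', ← mul_assoc x, ← (Nat.cast_commute _ x).eq, mul_assoc, mul_assoc]
  rw [sum_range_succ, sum_range_succ', sum_congr rfl hterm, ← Finset.mul_sum, ← Finset.mul_sum,
    Nat.choose_self, Nat.choose_one_right, Nat.cast_one, one_mul, pow_zero, mul_one,
    mul_add, mul_one, show q + 2 - 1 = q + 1 by omega]
  abel

theorem Nat.Prime.exists_unit_pow_pred_eq_mul {R : Type*} [Ring R] {p : ℕ} (hp : p.Prime)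
    (hpnil : IsNilpotent (p : R)) {x : R} (hν : ∑ i ∈ range p, (x + 1) ^ i = 0) :
    ∃ u : Rˣ, x ^ (p - 1) = p * u := by
  obtain ⟨w, hxw, hsum⟩ := hp.exists_sum_choose_succ_mul_pow_eq x
  rw [geom_sum_add_one_eq_sum_choose, hsum] at hν
  have hx : x ^ (p - 1) = p * -(1 + x * w) := by
    rw [mul_neg]
    exact eq_neg_of_add_eq_zero_left hν
  have hxnil : IsNilpotent x :=
    .of_pow (hx ▸ (Nat.cast_commute p _).isNilpotent_mul_right hpnil)
  exact ⟨(hxw.isNilpotent_mul_right hxnil).isUnit_one_add.neg.unit, hx⟩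

theorem AddSubgroup.prod_relIndex_Ico {G : Type*} [AddGroup G] {H : ℕ → AddSubgroup G}
    (hH : Monotone H) {a b : ℕ} (hab : a ≤ b) :
    ∏ i ∈ Ico a b, (H i).relIndex (H (i + 1)) = (H a).relIndex (H b) := by
  induction b, hab using Nat.le_induction with
  | base => simp
  | succ n han ih =>
    rw [prod_Ico_succ_top han, ih, relIndex_mul_relIndex _ _ _ (hH han) (hH n.le_succ)]

theorem AddSubgroup.card_mul_relIndex {G : Type*} [AddGroup G] {H K : AddSubgroup G}
    (h : H ≤ K) :
    Nat.card H * H.relIndex K = Nat.card K := by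
  rw [← relIndex_bot_left, ← relIndex_bot_left, relIndex_mul_relIndex _ _ _ bot_le h]

theorem AddMonoidHom.relIndex_range_eq_relIndex_ker {M N : Type*} [AddGroup M] [AddGroup N]
    [Finite M] {f g : M →+ N} (hrange : g.range ≤ f.range) (hker : f.ker ≤ g.ker) :
    g.range.relIndex f.range = f.ker.relIndex g.ker := by
  have card_range_mul_card_ker (h : M →+ N) :
      Nat.card h.range * Nat.card h.ker = Nat.card M := by
    rw [← AddSubgroup.index_ker, mul_comm, AddSubgroup.card_mul_index]
  have hrange_pos : 0 < Nat.card g.range :=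
    Nat.pos_of_mul_pos_right ((card_range_mul_card_ker g).symm ▸ Nat.card_pos (α := M))
  refine Nat.eq_of_mul_eq_mul_left (Nat.mul_pos hrange_pos (Nat.card_pos (α := f.ker))) ?_
  calc Nat.card g.range * Nat.card f.ker * g.range.relIndex f.range
      = Nat.card f.range * Nat.card f.ker := by
        rw [mul_right_comm, AddSubgroup.card_mul_relIndex hrange]
    _ = Nat.card g.range * (Nat.card f.ker * f.ker.relIndex g.ker) := by
        rw [card_range_mul_card_ker, AddSubgroup.card_mul_relIndex hker, card_range_mul_card_ker]
    _ = _ := (mul_assoc _ _ _).symm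

namespace AddMonoid.End

variable {M : Type*} [AddCommGroup M]

theorem ker_isUnit_mul {u : AddMonoid.End M} (hu : IsUnit u) (f : AddMonoid.End M) :
    (u * f).ker = f.ker := by
  obtain ⟨u, rfl⟩ := hu
  have hinj : Function.Injective u :=
    Function.LeftInverse.injective (g := ⇑(↑u⁻¹ : AddMonoid.End M))
      fun y => congrArg (fun g : AddMonoid.End M => g y) u.inv_mul
  ext x
  exact map_eq_zero_iff _ hinj

theorem ker_neg_pow (f : AddMonoid.End M) (n : ℕ) : ((-f) ^ n).ker = (f ^ n).ker := by
  rw [neg_pow]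
  exact ker_isUnit_mul (isUnit_neg_one.pow n) _

theorem monotone_ker_pow (f : AddMonoid.End M) : Monotone fun n => (f ^ n).ker :=
  fun i j hij x (hx : (f ^ i) x = 0) => show (f ^ j) x = 0 by
    rw [← pow_sub_mul_pow f hij]
    exact (congrArg (f ^ (j - i)) hx).trans (map_zero _)

theorem antitone_range_pow (f : AddMonoid.End M) : Antitone fun n => (f ^ n).range := by
  rintro i j hij _ ⟨x, rfl⟩
  exact ⟨(f ^ (j - i)) x, by rw [← pow_mul_pow_sub f hij]; rfl⟩

theorem isNilpotent_natCast [Finite M] {n : ℕ} (h : ∀ x : M, ∃ j, n ^ j • x = 0) :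
    IsNilpotent (n : AddMonoid.End M) := by
  choose j hj using h
  obtain ⟨x₀, hx₀⟩ := Finite.exists_max j
  refine ⟨j x₀, AddMonoidHom.ext fun x => show ((n : AddMonoid.End M) ^ j x₀) x = 0 from ?_⟩
  rw [← Nat.cast_pow, natCast_apply, ← Nat.sub_add_cancel (hx₀ x), pow_add, mul_smul,
    hj, smul_zero]

end AddMonoid.End

theorem one_sub_oneSubSigma_pow_apply {M : Type*} [AddCommGroup M] (σ : AddAut M) (n : ℕ)
    (x : M) : ((1 - oneSubSigma σ) ^ n) x = (n • σ) x := by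
  induction n with
  | zero => rfl
  | succ n ih =>
    rw [pow_succ', AddMonoid.End.coe_mul, Function.comp_apply, ih, oneSubSigma, sub_sub_cancel,
      succ_nsmul']
    rfl

theorem ker_oneSubSigma_pow_eq_ker_natCast_pow {M : Type*} [AddCommGroup M] [Finite M] {p : ℕ}
    (hp : p.Prime) (σ : AddAut M) (hpgrp : ∀ x : M, ∃ j : ℕ, p ^ j • x = 0)
    (hν : ∀ x : M, ∑ i ∈ range p, (i • σ) x = 0) (m : ℕ) :
    (oneSubSigma σ ^ (m * (p - 1))).ker = ((p : AddMonoid.End M) ^ m).ker := by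
  have hnorm : ∑ i ∈ range p, (-oneSubSigma σ + 1) ^ i = 0 := AddMonoidHom.ext fun x => by
    rw [neg_add_eq_sub]
    exact (AddMonoidHom.finsetSum_apply (fun i => (1 - oneSubSigma σ) ^ i) (range p) x).trans
      ((sum_congr rfl fun i _ => one_sub_oneSubSigma_pow_apply σ i x).trans (hν x))
  obtain ⟨u, hu⟩ :=
    hp.exists_unit_pow_pred_eq_mul (AddMonoid.End.isNilpotent_natCast hpgrp) hnorm
  rw [← AddMonoid.End.ker_neg_pow, pow_mul', hu, (Nat.cast_commute p _).mul_pow,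
    ((Nat.cast_commute p _).pow_pow m m).eq]
  exact AddMonoid.End.ker_isUnit_mul (u.isUnit.pow m) _

theorem stmt14_general {M : Type*} [AddCommGroup M] [Finite M] (p : ℕ) (hp : p.Prime)
    (σ : AddAut M)
    (hpgrp : ∀ x : M, ∃ j : ℕ, p ^ j • x = 0)
    (hν : ∀ x : M, ∑ i ∈ Finset.range p, (i • σ) x = 0)
    (k : ℕ) :
    Nat.card (↥(Ppow (⊤ : AddSubgroup M) (p ^ (k - 1))) ⧸
        (Ppow (⊤ : AddSubgroup M) (p ^ k)).addSubgroupOf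
          (Ppow (⊤ : AddSubgroup M) (p ^ (k - 1)))) =
      ∏ i ∈ Finset.Ico ((k - 1) * (p - 1)) (k * (p - 1)),
        Nat.card (↥(AddMonoidHom.ker ((oneSubSigma σ) ^ (i + 1))) ⧸
          (AddMonoidHom.ker ((oneSubSigma σ) ^ i)).addSubgroupOf
            (AddMonoidHom.ker ((oneSubSigma σ) ^ (i + 1)))) := by
  have hPpow (m : ℕ) :
      Ppow (⊤ : AddSubgroup M) (p ^ m) = ((p : AddMonoid.End M) ^ m).range := by
    rw [Ppow, ← Nat.cast_pow]
    exact (AddMonoidHom.range_eq_map _).symm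
  change (Ppow ⊤ (p ^ k)).relIndex (Ppow ⊤ (p ^ (k - 1))) =
    ∏ i ∈ Ico _ _, ((oneSubSigma σ ^ i).ker).relIndex (oneSubSigma σ ^ (i + 1)).ker
  have hker := ker_oneSubSigma_pow_eq_ker_natCast_pow hp σ hpgrp hν
  rw [AddSubgroup.prod_relIndex_Ico (AddMonoid.End.monotone_ker_pow _)
      (Nat.mul_le_mul_right _ (k.sub_le 1)), hker, hker, hPpow, hPpow]
  exact AddMonoidHom.relIndex_range_eq_relIndex_ker
    (AddMonoid.End.antitone_range_pow _ (k.sub_le 1))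
    (AddMonoid.End.monotone_ker_pow _ (k.sub_le 1))

/-- For `G = ⟨σ⟩` of order `p` acting on a finite abelian `p`-group `M` annihilated by
the norm `ν`: with `M_i = ker((1-σ)^i)`, the `p^k`-rank `R_k` of `M` satisfies
`p^{R_k} = #(M^{p^{k-1}}/M^{p^k}) = ∏_{i=(k-1)(p-1)}^{k(p-1)-1} #(M_{i+1}/M_i)`. -/
theorem stmt14 {M : Type*} [AddCommGroup M] [Finite M] (p : ℕ) (hp : p.Prime)
    (σ : AddAut M) (hσ : p • σ = 0)
    (hpgrp : ∀ x : M, ∃ j : ℕ, p ^ j • x = 0)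
    (hν : ∀ x : M, ∑ i ∈ Finset.range p, (i • σ) x = 0)
    (k : ℕ) (hk : 1 ≤ k) :
    Nat.card (↥(Ppow (⊤ : AddSubgroup M) (p ^ (k - 1))) ⧸
        (Ppow (⊤ : AddSubgroup M) (p ^ k)).addSubgroupOf
          (Ppow (⊤ : AddSubgroup M) (p ^ (k - 1)))) =
      ∏ i ∈ Finset.Ico ((k - 1) * (p - 1)) (k * (p - 1)),
        Nat.card (↥(AddMonoidHom.ker ((oneSubSigma σ) ^ (i + 1))) ⧸
          (AddMonoidHom.ker ((oneSubSigma σ) ^ i)).addSubgroupOf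
            (AddMonoidHom.ker ((oneSubSigma σ) ^ (i + 1)))) :=
  stmt14_general p hp σ hpgrp hν k
end
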